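/- arXiv:1401.5866 — 3 statements merged into one kernel-verified Lean document; each statement's English description precedes it below -/
import Mathlib

section
/- Let f ∈ 𝕃 ∖ 𝔽_q(t), let 0 ≤ s ≤ k, let a ∈ 𝔽_q be nonzero, and let B_{i+1} ∈ 𝔽_q[t] for s ≤ i ≤ k satisfy |B_{i+1}| < |A_{i+1}| and B_{s+1} ≠ 0. If V = a·Q_{k+1} + B_{k+1}Q_k + ⋯ + B_{s+1}Q_s, then |{Vf}| = |B_{s+1}| / |Q_{s+1}|. -/
/-!
Setting: `q` a prime power is formalized as `q = Fintype.card Fq` for a finite field `Fq`.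
The field `K = 𝔽_q((t⁻¹))` of formal Laurent series in `t⁻¹` is realized as
`LaurentSeries Fq = 𝔽_q((X))` with `X = t⁻¹` (so `deg f = -(X-adic order of f)`).
-/

open scoped Classical
open MeasureTheory Filter
open scoped ENNReal

noncomputable section

variable (Fq : Type) [Field Fq] [Fintype Fq]

/-- `t ∈ K = 𝔽_q((t⁻¹))`, realized as the inverse of the variable `X` of
`LaurentSeries Fq`. -/
def tvar : LaurentSeries Fq := (HahnSeries.single (1 : ℤ) (1 : Fq))⁻¹

/-- The degree `deg f ∈ ℤ ∪ {-∞}` of `f ∈ K`, with `deg 0 = ⊥ = -∞`. -/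
def fdeg (f : LaurentSeries Fq) : WithBot ℤ :=
  if f = 0 then ⊥ else ((-f.order : ℤ) : WithBot ℤ)

/-- The absolute value `|f| = q^(deg f)`, with `|0| = 0`. -/
def fabs (f : LaurentSeries Fq) : ℝ :=
  if f = 0 then 0 else (Fintype.card Fq : ℝ) ^ (-f.order)

/-- Keep only the part of `f` with `X`-exponents `≤ N`, i.e. `t`-exponents `≥ -N`. -/
def cutoff (N : ℤ) (f : LaurentSeries Fq) : LaurentSeries Fq where
  coeff j := if j ≤ N then f.coeff j else 0
  isPWO_support' := f.isPWO_support'.mono (by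
    intro j hj
    by_cases hN : j ≤ N
    · simpa [Function.mem_support, hN] using hj
    · simp [Function.mem_support, hN] at hj)

/-- The polynomial part `[f] ∈ 𝔽_q[t]` of `f` (the part with `t`-exponents `≥ 0`). -/
def polyPart (f : LaurentSeries Fq) : LaurentSeries Fq := cutoff Fq 0 f

/-- The fractional part `{f} = f - [f]`. -/
def fracPart (f : LaurentSeries Fq) : LaurentSeries Fq := f - polyPart Fq f

/-- `𝒪 = {f ∈ K : |f| ≤ 1}`. -/
def setO : Set (LaurentSeries Fq) := {f | fabs Fq f ≤ 1}

/-- `𝕃 = {f ∈ K : |f| < 1}`. -/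
def setL : Set (LaurentSeries Fq) := {f | fabs Fq f < 1}

/-- `𝕁₀ = {f ∈ 𝒪 : deg f = 0}`. -/
def setJ0 : Set (LaurentSeries Fq) := {f | fdeg Fq f = ((0 : ℤ) : WithBot ℤ)}

/-- The embedding `𝔽_q[t] → K`, sending a polynomial `P` to `P(t)`. -/
def polyT (P : Polynomial Fq) : LaurentSeries Fq := Polynomial.aeval (tvar Fq) P

/-- The subfield `𝔽_q(t) ⊆ K` of rational functions (as a subset). -/
def ratSet : Set (LaurentSeries Fq) :=
  {g | ∃ P Q : Polynomial Fq, Q ≠ 0 ∧ g = polyT Fq P / polyT Fq Q}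

/-- The Artin map `Ψ(f) = {1/f}`. -/
def artin (f : LaurentSeries Fq) : LaurentSeries Fq := fracPart Fq f⁻¹

/-- The partial quotients `A_n = [1/Ψ^{n-1}(f)]` (`n ≥ 1`). -/
def pquot (f : LaurentSeries Fq) (n : ℕ) : LaurentSeries Fq :=
  polyPart Fq (((artin Fq)^[n - 1] f)⁻¹)

/-- `convPQ f (k+1) = (P_k, Q_k)`, the principal convergents;
`convPQ f 0 = (P_{-1}, Q_{-1}) = (1, 0)`, `convPQ f 1 = (P_0, Q_0) = (0, 1)`. -/
def convPQ (f : LaurentSeries Fq) : ℕ → LaurentSeries Fq × LaurentSeries Fq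
  | 0 => (1, 0)
  | 1 => (0, 1)
  | (n + 2) => (pquot Fq f (n + 1) * (convPQ f (n + 1)).1 + (convPQ f n).1,
                pquot Fq f (n + 1) * (convPQ f (n + 1)).2 + (convPQ f n).2)

/-- `Pc f (k+1) = P_k`. -/
def Pc (f : LaurentSeries Fq) (n : ℕ) : LaurentSeries Fq := (convPQ Fq f n).1

/-- `Qc f (k+1) = Q_k`. -/
def Qc (f : LaurentSeries Fq) (n : ℕ) : LaurentSeries Fq := (convPQ Fq f n).2

/-- The geometric Farey map `F` on `𝕃 × ℤ`. -/
def fareyGeom (p : LaurentSeries Fq × ℤ) : LaurentSeries Fq × ℤ :=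
  if fdeg Fq p.1 < ((-1 : ℤ) : WithBot ℤ) ∨ p.2 < 0 then
    (fracPart Fq (tvar Fq * p.1), p.2 + 1)
  else
    (fracPart Fq ((tvar Fq * p.1)⁻¹), -(p.2 + 1))

/-- The algebraic Farey map `F_h` associated to `h`. -/
def fareyAlg (h : LaurentSeries Fq) (f : LaurentSeries Fq) : LaurentSeries Fq :=
  if fdeg Fq f = ((0 : ℤ) : WithBot ℤ) then
    (1 - polyPart Fq ((1 - h) * f⁻¹) * f) / f
  else
    f / (1 - polyPart Fq ((1 - h) * f⁻¹) * f)

/-- The matrix `M(f, n)` associated to the geometric Farey map. -/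
def geomMat (p : LaurentSeries Fq × ℤ) : Matrix (Fin 2) (Fin 2) (LaurentSeries Fq) :=
  if p.2 < 0 then
    !![(tvar Fq)⁻¹, (tvar Fq)⁻¹ * polyPart Fq (tvar Fq * p.1); 0, 1]
  else if fdeg Fq p.1 = ((-1 : ℤ) : WithBot ℤ) then
    !![0, 1; tvar Fq, tvar Fq * polyPart Fq ((tvar Fq * p.1)⁻¹)]
  else
    !![1, 0; 0, tvar Fq]

/-- The matrix `M_h(f)` associated to the algebraic Farey map `F_h`. -/
def algMat (h : LaurentSeries Fq) (f : LaurentSeries Fq) :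
    Matrix (Fin 2) (Fin 2) (LaurentSeries Fq) :=
  if fdeg Fq f = ((0 : ℤ) : WithBot ℤ) then
    !![0, 1; 1, polyPart Fq ((1 - h) * f⁻¹)]
  else
    !![1, 0; polyPart Fq ((1 - h) * f⁻¹), 1]

/-- The leading term `LT(f)` of `f`. -/
def leadTerm (f : LaurentSeries Fq) : LaurentSeries Fq :=
  HahnSeries.single f.order (f.coeff f.order)

/-- `G(f) = 1/f - 1/LT(f)`. -/
def Gmap (f : LaurentSeries Fq) : LaurentSeries Fq := f⁻¹ - (leadTerm Fq f)⁻¹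

/-- The Farey map `F_𝕁` of Berthé–Nakada–Natsui. -/
def fareyBNN (f : LaurentSeries Fq) : LaurentSeries Fq :=
  if ((0 : ℤ) : WithBot ℤ) ≤ fdeg Fq (Gmap Fq f) then (Gmap Fq f)⁻¹
  else f⁻¹ - polyPart Fq f⁻¹

/-- The Borel measurable structure on `K`, for the valued-field topology. -/
instance : MeasurableSpace (LaurentSeries Fq) := borel _
instance : BorelSpace (LaurentSeries Fq) := ⟨rfl⟩

/-!
Write `E_n = Q_n f - P_n`. Then `V f` is a polynomial plus
`a E_{k+1} + ∑_{i=s}^{k} B_{i+1} E_i`. Since `|E_n| = 1/|Q_{n+1}|` and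
`|Q_{n+1}| = |A_{n+1}| |Q_n|`, a term `C E_i` with `|C| < |A_{i+1}|` has absolute value
`< |A_{i+1}|/|Q_{i+1}| = 1/|Q_i|`. Hence, as `|B_{s+1}| ≥ 1`, the term `B_{s+1} E_s` strictly
dominates all the others, so by the ultrametric inequality the remainder has absolute value
`|B_{s+1}|/|Q_{s+1}| < 1`; it is therefore the fractional part of `V f`.
-/

section AbsoluteValue

variable {Fq}

lemma one_lt_card_real : (1 : ℝ) < Fintype.card Fq := by
  exact_mod_cast Fintype.one_lt_card

lemma fabs_of_ne_zero {x : LaurentSeries Fq} (hx : x ≠ 0) :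
    fabs Fq x = (Fintype.card Fq : ℝ) ^ (-x.order) :=
  if_neg hx

@[simp]
lemma fabs_zero : fabs Fq 0 = 0 :=
  if_pos rfl

lemma fabs_nonneg (x : LaurentSeries Fq) : 0 ≤ fabs Fq x := by
  unfold fabs
  split_ifs
  exacts [le_rfl, zpow_nonneg (by positivity) _]

lemma fabs_eq_zero {x : LaurentSeries Fq} : fabs Fq x = 0 ↔ x = 0 := by
  unfold fabs
  split_ifs with hx
  · simp [hx]
  · simpa [hx] using zpow_ne_zero _ (by positivity)

lemma fabs_pos {x : LaurentSeries Fq} (hx : x ≠ 0) : 0 < fabs Fq x :=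
  (fabs_nonneg x).lt_of_ne' (fabs_eq_zero.not.2 hx)

lemma fabs_mul (x y : LaurentSeries Fq) : fabs Fq (x * y) = fabs Fq x * fabs Fq y := by
  rcases eq_or_ne x 0 with rfl | hx
  · simp
  rcases eq_or_ne y 0 with rfl | hy
  · simp
  rw [fabs_of_ne_zero hx, fabs_of_ne_zero hy, fabs_of_ne_zero (mul_ne_zero hx hy),
    HahnSeries.order_mul hx hy, neg_add, zpow_add₀ (by positivity)]

lemma fabs_le_fabs_of_order_le {x y : LaurentSeries Fq} (hx : x ≠ 0) (hy : y ≠ 0)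
    (h : x.order ≤ y.order) : fabs Fq y ≤ fabs Fq x := by
  rw [fabs_of_ne_zero hx, fabs_of_ne_zero hy]
  exact zpow_le_zpow_right₀ one_lt_card_real.le (neg_le_neg h)

lemma isNonarchimedean_fabs : IsNonarchimedean (fabs Fq) := by
  intro x y
  rcases eq_or_ne x 0 with rfl | hx
  · simp
  rcases eq_or_ne y 0 with rfl | hy
  · simp
  rcases eq_or_ne (x + y) 0 with hxy | hxy
  · simp [hxy, fabs_nonneg]
  have hmin := HahnSeries.min_order_le_order_add hxy
  rcases le_total x.order y.order with h | h
  · exact le_max_of_le_left <|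
      fabs_le_fabs_of_order_le hx hxy ((min_eq_left h).symm.trans_le hmin)
  · exact le_max_of_le_right <|
      fabs_le_fabs_of_order_le hy hxy ((min_eq_right h).symm.trans_le hmin)

variable (Fq) in
def fabsAbv : AbsoluteValue (LaurentSeries Fq) ℝ where
  toFun := fabs Fq
  map_mul' := fabs_mul
  nonneg' := fabs_nonneg
  eq_zero' _ := fabs_eq_zero
  add_le' x y :=
    (isNonarchimedean_fabs x y).trans (max_le_add_of_nonneg (fabs_nonneg x) (fabs_nonneg y))

lemma fabs_inv (x : LaurentSeries Fq) : fabs Fq x⁻¹ = (fabs Fq x)⁻¹ :=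
  map_inv₀ (fabsAbv Fq) x

lemma fabs_one : fabs Fq 1 = 1 :=
  map_one (fabsAbv Fq)

lemma fabs_neg (x : LaurentSeries Fq) : fabs Fq (-x) = fabs Fq x :=
  (fabsAbv Fq).map_neg x

lemma fabs_add_eq_left_of_lt {x y : LaurentSeries Fq} (h : fabs Fq y < fabs Fq x) :
    fabs Fq (x + y) = fabs Fq x := by
  rw [isNonarchimedean_fabs.add_eq_max_of_ne' _ (fun z ↦ (fabs_neg z).symm) h.ne',
    max_eq_left h.le]

lemma fabs_algebraMap_le_one (a : Fq) : fabs Fq (algebraMap Fq (LaurentSeries Fq) a) ≤ 1 := by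
  rcases eq_or_ne a 0 with rfl | ha
  · simp
  rw [LaurentSeries.algebraMap_apply, HahnSeries.C_apply,
    fabs_of_ne_zero (HahnSeries.single_ne_zero ha), HahnSeries.order_single ha]
  simp

end AbsoluteValue

section PolynomialPart

variable {Fq : Type} [Field Fq]

variable (Fq) in
abbrev polySubalgebra : Subalgebra Fq (LaurentSeries Fq) :=
  (Polynomial.aeval (tvar Fq)).range

lemma polyPart_coeff (g : LaurentSeries Fq) (j : ℤ) :
    (polyPart Fq g).coeff j = if j ≤ 0 then g.coeff j else 0 :=
  rfl

lemma polyPart_add (g h : LaurentSeries Fq) :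
    polyPart Fq (g + h) = polyPart Fq g + polyPart Fq h := by
  ext j
  simp only [polyPart_coeff, HahnSeries.coeff_add]
  split_ifs <;> simp

lemma fracPart_add (g h : LaurentSeries Fq) :
    fracPart Fq (g + h) = fracPart Fq g + fracPart Fq h := by
  simp only [fracPart, polyPart_add]
  ring

lemma polyPart_fracPart (g : LaurentSeries Fq) : polyPart Fq (fracPart Fq g) = 0 := by
  ext j
  simp only [fracPart, polyPart_coeff, HahnSeries.coeff_sub, HahnSeries.coeff_zero]
  split_ifs <;> simp

lemma polyPart_eq_zero_iff {g : LaurentSeries Fq} (hg : g ≠ 0) :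
    polyPart Fq g = 0 ↔ 0 < g.order := by
  constructor
  · intro h
    by_contra! hle
    apply HahnSeries.coeff_order_eq_zero.not.2 hg
    simpa [polyPart_coeff, hle] using congrArg (HahnSeries.coeff · g.order) h
  · intro h
    ext j
    rw [polyPart_coeff, HahnSeries.coeff_zero]
    split_ifs with hj
    · exact HahnSeries.coeff_eq_zero_of_lt_order (by omega)
    · rfl

lemma tvar_eq : tvar Fq = HahnSeries.single (-1) 1 :=
  inv_eq_of_mul_eq_one_right (by simp [HahnSeries.single_mul_single])

lemma polyT_monomial (n : ℕ) (c : Fq) :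
    polyT Fq (Polynomial.monomial n c) = HahnSeries.single (-n : ℤ) c := by
  rw [polyT, Polynomial.aeval_monomial, tvar_eq, HahnSeries.single_pow,
    LaurentSeries.algebraMap_apply, HahnSeries.C_apply, HahnSeries.single_mul_single]
  simp

lemma polyPart_polyT (P : Polynomial Fq) : polyPart Fq (polyT Fq P) = polyT Fq P := by
  induction P using Polynomial.induction_on' with
  | add P Q hP hQ => simp only [polyT, map_add] at *; rw [polyPart_add, hP, hQ]
  | monomial n c =>
    ext j
    rw [polyPart_coeff, polyT_monomial, HahnSeries.coeff_single]
    split_ifs <;> first | rfl | omega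

lemma fracPart_eq_zero_of_mem {x : LaurentSeries Fq} (hx : x ∈ polySubalgebra Fq) :
    fracPart Fq x = 0 := by
  obtain ⟨P, rfl⟩ := (AlgHom.mem_range _).1 hx
  show polyT Fq P - polyPart Fq (polyT Fq P) = 0
  rw [polyPart_polyT, sub_self]

lemma polyPart_mem (g : LaurentSeries Fq) : polyPart Fq g ∈ polySubalgebra Fq := by
  set N := (-g.order).toNat
  refine (AlgHom.mem_range _).2
    ⟨∑ n ∈ Finset.range (N + 1), Polynomial.monomial n (g.coeff (-n)), ?_⟩
  rw [map_sum]
  ext j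
  simp only [← polyT.eq_1, polyT_monomial, HahnSeries.coeff_sum, HahnSeries.coeff_single,
    polyPart_coeff]
  split_ifs with hj
  · rw [Finset.sum_eq_single (-j).toNat]
    · rw [if_pos (by omega)]
      congr 1
      omega
    · exact fun n _ hn ↦ if_neg (by omega)
    · intro hN
      rw [Finset.mem_range, not_lt] at hN
      rw [if_pos (by omega), HahnSeries.coeff_eq_zero_of_lt_order (by omega)]
  · exact Finset.sum_eq_zero fun n _ ↦ if_neg (by omega)

end PolynomialPart

section FractionalPart

variable {Fq}

lemma fabs_lt_one_iff_polyPart_eq_zero {g : LaurentSeries Fq} :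
    fabs Fq g < 1 ↔ polyPart Fq g = 0 := by
  rcases eq_or_ne g 0 with rfl | hg
  · refine iff_of_true (by simp) ?_
    ext j
    simp [polyPart_coeff]
  rw [polyPart_eq_zero_iff hg, fabs_of_ne_zero hg, zpow_lt_one_iff_right₀ one_lt_card_real,
    neg_neg_iff_pos]

lemma fabs_fracPart_lt_one (g : LaurentSeries Fq) : fabs Fq (fracPart Fq g) < 1 :=
  fabs_lt_one_iff_polyPart_eq_zero.2 (polyPart_fracPart g)

lemma fracPart_eq_self {g : LaurentSeries Fq} (h : fabs Fq g < 1) : fracPart Fq g = g := by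
  rw [fracPart, fabs_lt_one_iff_polyPart_eq_zero.1 h, sub_zero]

lemma fabs_polyPart_of_one_lt {x : LaurentSeries Fq} (h : 1 < fabs Fq x) :
    fabs Fq (polyPart Fq x) = fabs Fq x := by
  have hsplit : polyPart Fq x = x + -fracPart Fq x := by rw [fracPart]; ring
  have hfrac : fabs Fq (-fracPart Fq x) < fabs Fq x := by
    rw [fabs_neg]
    exact (fabs_fracPart_lt_one x).trans h
  rw [hsplit, fabs_add_eq_left_of_lt hfrac]

lemma one_le_fabs_of_mem {x : LaurentSeries Fq} (hx : x ∈ polySubalgebra Fq) (h : x ≠ 0) :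
    1 ≤ fabs Fq x := by
  obtain ⟨P, rfl⟩ := (AlgHom.mem_range _).1 hx
  by_contra! hlt
  exact h ((polyPart_polyT P).symm.trans (fabs_lt_one_iff_polyPart_eq_zero.1 hlt))

end FractionalPart

section RationalFunctions

variable {Fq : Type} [Field Fq]

lemma zero_mem_ratSet : (0 : LaurentSeries Fq) ∈ ratSet Fq :=
  ⟨0, 1, one_ne_zero, by simp [polyT]⟩

lemma inv_mem_ratSet {x : LaurentSeries Fq} (hx : x ∈ ratSet Fq) : x⁻¹ ∈ ratSet Fq := by
  obtain ⟨P, Q, hQ, rfl⟩ := hx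
  rcases eq_or_ne P 0 with rfl | hP
  · simpa [polyT] using zero_mem_ratSet
  · exact ⟨Q, P, hP, inv_div _ _⟩

lemma add_mem_ratSet {x y : LaurentSeries Fq} (hx : x ∈ ratSet Fq)
    (hy : y ∈ polySubalgebra Fq) : x + y ∈ ratSet Fq := by
  obtain ⟨P, Q, hQ, rfl⟩ := hx
  obtain ⟨R, rfl⟩ := (AlgHom.mem_range _).1 hy
  simp only [ratSet, polyT]
  by_cases hQ' : Polynomial.aeval (tvar Fq) Q = 0
  · exact ⟨R, 1, one_ne_zero, by simp [hQ']⟩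
  · exact ⟨P + R * Q, Q, hQ, by simp only [map_add, map_mul]; field_simp⟩

lemma artin_notMem_ratSet {g : LaurentSeries Fq} (hg : g ∉ ratSet Fq) :
    artin Fq g ∉ ratSet Fq := by
  intro h
  apply hg
  rw [← inv_inv g, ← sub_add_cancel g⁻¹ (polyPart Fq g⁻¹)]
  exact inv_mem_ratSet (add_mem_ratSet h (polyPart_mem _))

lemma artin_iterate_ne_zero {f : LaurentSeries Fq} (hf : f ∉ ratSet Fq) (n : ℕ) :
    (artin Fq)^[n] f ≠ 0 := by
  induction n generalizing f with
  | zero => rintro rfl; exact hf zero_mem_ratSet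
  | succ n ih => rw [Function.iterate_succ_apply]; exact ih (artin_notMem_ratSet hf)

end RationalFunctions

section Convergents

variable {Fq : Type} [Field Fq] (f : LaurentSeries Fq)

/-- With the indexing of `Pc` and `Qc`, `convError f (n + 1) = Q_n f - P_n`. -/
def convError (n : ℕ) : LaurentSeries Fq :=
  f * Qc Fq f n - Pc Fq f n

lemma Qc_add_two (n : ℕ) :
    Qc Fq f (n + 2) = pquot Fq f (n + 1) * Qc Fq f (n + 1) + Qc Fq f n :=
  rfl

lemma Pc_add_two (n : ℕ) :
    Pc Fq f (n + 2) = pquot Fq f (n + 1) * Pc Fq f (n + 1) + Pc Fq f n :=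
  rfl

lemma Qc_one : Qc Fq f 1 = 1 :=
  rfl

lemma pquot_succ (n : ℕ) : pquot Fq f (n + 1) = polyPart Fq ((artin Fq)^[n] f)⁻¹ :=
  rfl

lemma artin_iterate_succ (n : ℕ) :
    (artin Fq)^[n + 1] f = ((artin Fq)^[n] f)⁻¹ - pquot Fq f (n + 1) :=
  Function.iterate_succ_apply' _ _ _

lemma Pc_mem (n : ℕ) : Pc Fq f n ∈ polySubalgebra Fq := by
  induction n using Nat.twoStepInduction with
  | zero => exact one_mem _
  | one => exact zero_mem _
  | more n h₀ h₁ => exact add_mem (mul_mem (polyPart_mem _) h₁) h₀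

lemma convError_add_two (n : ℕ) :
    convError f (n + 2) = pquot Fq f (n + 1) * convError f (n + 1) + convError f n := by
  simp only [convError, Qc_add_two, Pc_add_two]
  ring

lemma convError_succ {f : LaurentSeries Fq} (hf : f ∉ ratSet Fq) (n : ℕ) :
    convError f (n + 1) = -(artin Fq)^[n] f * convError f n := by
  induction n with
  | zero => simp [convError, Qc, Pc, convPQ]
  | succ n ih =>
    have hψ := artin_iterate_ne_zero hf n
    rw [convError_add_two, artin_iterate_succ, ih]
    field_simp
    ring

end Convergents

section ConvergentBounds

variable {Fq} {f : LaurentSeries Fq}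

lemma fabs_Qc_add_two_of_lt {n : ℕ} (hA : 1 < fabs Fq (pquot Fq f (n + 1)))
    (h : fabs Fq (Qc Fq f n) < fabs Fq (Qc Fq f (n + 1))) :
    fabs Fq (Qc Fq f (n + 2)) = fabs Fq (pquot Fq f (n + 1)) * fabs Fq (Qc Fq f (n + 1)) := by
  have hlt : fabs Fq (Qc Fq f n) < fabs Fq (pquot Fq f (n + 1) * Qc Fq f (n + 1)) := by
    rw [fabs_mul]
    exact h.trans_le (le_mul_of_one_le_left (fabs_nonneg _) hA.le)
  rw [Qc_add_two, fabs_add_eq_left_of_lt hlt, fabs_mul]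

section

variable (hA : ∀ n, 1 < fabs Fq (pquot Fq f (n + 1)))
include hA

lemma fabs_Qc_lt_succ (n : ℕ) : fabs Fq (Qc Fq f n) < fabs Fq (Qc Fq f (n + 1)) := by
  induction n with
  | zero => simp [fabs_one, Qc, convPQ]
  | succ n ih =>
    rw [fabs_Qc_add_two_of_lt (hA n) ih]
    exact lt_mul_of_one_lt_left ((fabs_nonneg _).trans_lt ih) (hA n)

lemma fabs_Qc_add_two (n : ℕ) :
    fabs Fq (Qc Fq f (n + 2)) = fabs Fq (pquot Fq f (n + 1)) * fabs Fq (Qc Fq f (n + 1)) :=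
  fabs_Qc_add_two_of_lt (hA n) (fabs_Qc_lt_succ hA n)

lemma fabs_Qc_mono : Monotone fun n ↦ fabs Fq (Qc Fq f n) :=
  monotone_nat_of_le_succ fun n ↦ (fabs_Qc_lt_succ hA n).le

lemma one_le_fabs_Qc (n : ℕ) : 1 ≤ fabs Fq (Qc Fq f (n + 1)) := by
  simpa [Qc_one, fabs_one] using fabs_Qc_mono hA (Nat.le_add_left 1 n)

end

variable (hfL : f ∈ setL Fq) (hf : f ∉ ratSet Fq)
include hfL hf

lemma one_lt_fabs_inv_artin_iterate (n : ℕ) : 1 < fabs Fq ((artin Fq)^[n] f)⁻¹ := by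
  rw [fabs_inv, one_lt_inv₀ (fabs_pos (artin_iterate_ne_zero hf n))]
  cases n with
  | zero => exact hfL
  | succ n => rw [Function.iterate_succ_apply']; exact fabs_fracPart_lt_one _

lemma fabs_pquot (n : ℕ) : fabs Fq (pquot Fq f (n + 1)) = (fabs Fq ((artin Fq)^[n] f))⁻¹ := by
  rw [pquot_succ, fabs_polyPart_of_one_lt (one_lt_fabs_inv_artin_iterate hfL hf n), fabs_inv]

lemma one_lt_fabs_pquot (n : ℕ) : 1 < fabs Fq (pquot Fq f (n + 1)) := by
  rw [pquot_succ, fabs_polyPart_of_one_lt (one_lt_fabs_inv_artin_iterate hfL hf n)]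
  exact one_lt_fabs_inv_artin_iterate hfL hf n

lemma fabs_convError (n : ℕ) :
    fabs Fq (convError f (n + 1)) = (fabs Fq (Qc Fq f (n + 2)))⁻¹ := by
  have hA := one_lt_fabs_pquot hfL hf
  induction n with
  | zero =>
    rw [fabs_Qc_add_two hA, fabs_pquot hfL hf, Qc_one, fabs_one, mul_one, inv_inv]
    simp [convError, Qc, Pc, convPQ]
  | succ n ih =>
    rw [convError_succ hf, fabs_mul, fabs_neg, ih, fabs_Qc_add_two hA (n + 1),
      fabs_pquot hfL hf, mul_inv, inv_inv]

lemma fabs_mul_convError (C : LaurentSeries Fq) (n : ℕ) :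
    fabs Fq (C * convError f (n + 1)) = fabs Fq C / fabs Fq (Qc Fq f (n + 2)) := by
  rw [fabs_mul, fabs_convError hfL hf, div_eq_mul_inv]

lemma fabs_pquot_mul_fabs_convError (n : ℕ) :
    fabs Fq (pquot Fq f (n + 1)) * fabs Fq (convError f (n + 1))
      = (fabs Fq (Qc Fq f (n + 1)))⁻¹ := by
  have hA := one_lt_fabs_pquot hfL hf
  rw [fabs_convError hfL hf, fabs_Qc_add_two hA, mul_inv, ← mul_assoc,
    mul_inv_cancel₀ (zero_lt_one.trans (hA n)).ne', one_mul]

lemma fabs_mul_convError_lt {C : LaurentSeries Fq} {n : ℕ}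
    (h : fabs Fq C < fabs Fq (pquot Fq f (n + 1))) :
    fabs Fq (C * convError f (n + 1)) < (fabs Fq (Qc Fq f (n + 1)))⁻¹ := by
  have hQ := one_le_fabs_Qc (one_lt_fabs_pquot hfL hf) (n + 1)
  rw [fabs_mul, ← fabs_pquot_mul_fabs_convError hfL hf]
  refine mul_lt_mul_of_pos_right h ?_
  rw [fabs_convError hfL hf]
  positivity

lemma fabs_sum_mul_convError {s k : ℕ} (hsk : s ≤ k) {C : ℕ → LaurentSeries Fq}
    (hC : ∀ i ∈ Finset.Icc s k, fabs Fq (C i) < fabs Fq (pquot Fq f (i + 1)))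
    (hCs : 1 ≤ fabs Fq (C s)) :
    fabs Fq (∑ i ∈ Finset.Icc s k, C i * convError f (i + 1))
      = fabs Fq (C s) / fabs Fq (Qc Fq f (s + 2)) := by
  have hA := one_lt_fabs_pquot hfL hf
  have hQ := one_le_fabs_Qc hA (s + 1)
  rw [← fabs_mul_convError hfL hf]
  refine isNonarchimedean_fabs.apply_sum_eq_of_lt (fun x ↦ (fabs_neg x).symm)
    (Finset.mem_Icc.2 ⟨le_rfl, hsk⟩) fun i hi his ↦ ?_
  have hsi : s + 2 ≤ i + 1 := by grind
  calc fabs Fq (C i * convError f (i + 1))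
      < (fabs Fq (Qc Fq f (i + 1)))⁻¹ := fabs_mul_convError_lt hfL hf (hC i hi)
    _ ≤ (fabs Fq (Qc Fq f (s + 2)))⁻¹ := inv_anti₀ (by positivity) (fabs_Qc_mono hA hsi)
    _ ≤ fabs Fq (C s * convError f (s + 1)) := by
      rw [fabs_mul_convError hfL hf, inv_eq_one_div]
      gcongr

lemma fabs_fracPart_sum_mul_Qc_mul {s k : ℕ} (hsk : s ≤ k) {C : ℕ → LaurentSeries Fq}
    (hCmem : ∀ i ∈ Finset.Icc s k, C i ∈ polySubalgebra Fq)
    (hC : ∀ i ∈ Finset.Icc s k, fabs Fq (C i) < fabs Fq (pquot Fq f (i + 1)))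
    (hCs : C s ≠ 0) :
    fabs Fq (fracPart Fq ((∑ i ∈ Finset.Icc s k, C i * Qc Fq f (i + 1)) * f))
      = fabs Fq (C s) / fabs Fq (Qc Fq f (s + 2)) := by
  have hs : s ∈ Finset.Icc s k := Finset.mem_Icc.2 ⟨le_rfl, hsk⟩
  have habs := fabs_sum_mul_convError hfL hf hsk hC (one_le_fabs_of_mem (hCmem s hs) hCs)
  have hsplit : (∑ i ∈ Finset.Icc s k, C i * Qc Fq f (i + 1)) * f
      = ∑ i ∈ Finset.Icc s k, C i * Pc Fq f (i + 1)
        + ∑ i ∈ Finset.Icc s k, C i * convError f (i + 1) := by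
    rw [Finset.sum_mul, ← Finset.sum_add_distrib]
    exact Finset.sum_congr rfl fun i _ ↦ by rw [convError]; ring
  have hlt : fabs Fq (∑ i ∈ Finset.Icc s k, C i * convError f (i + 1)) < 1 := by
    rw [habs, ← fabs_mul_convError hfL hf]
    exact (fabs_mul_convError_lt hfL hf (hC s hs)).trans_le
      (inv_le_one_of_one_le₀ (one_le_fabs_Qc (one_lt_fabs_pquot hfL hf) s))
  rw [hsplit, fracPart_add,
    fracPart_eq_zero_of_mem (sum_mem fun i hi ↦ mul_mem (hCmem i hi) (Pc_mem f _)), zero_add,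
    fracPart_eq_self hlt, habs]

end ConvergentBounds

theorem frac_part_of_combination
    (f : LaurentSeries Fq) (hfL : f ∈ setL Fq) (hfirr : f ∉ ratSet Fq)
    (s k : ℕ) (hsk : s ≤ k) (a : Fq)
    (B : ℕ → LaurentSeries Fq)
    (hBpoly : ∀ i, s ≤ i → i ≤ k → B (i + 1) ∈ Set.range (polyT Fq))
    (hBlt : ∀ i, s ≤ i → i ≤ k → fabs Fq (B (i + 1)) < fabs Fq (pquot Fq f (i + 1)))
    (hBs : B (s + 1) ≠ 0)
    (V : LaurentSeries Fq)
    (hV : V = algebraMap Fq (LaurentSeries Fq) a * Qc Fq f (k + 2)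
        + ∑ i ∈ Finset.Icc s k, B (i + 1) * Qc Fq f (i + 1)) :
    fabs Fq (fracPart Fq (V * f)) = fabs Fq (B (s + 1)) / fabs Fq (Qc Fq f (s + 2)) := by
  set C : ℕ → LaurentSeries Fq := fun i ↦
    if i = k + 1 then algebraMap Fq (LaurentSeries Fq) a else B (i + 1)
  have hVC : V = ∑ i ∈ Finset.Icc s (k + 1), C i * Qc Fq f (i + 1) := by
    rw [hV, Finset.sum_Icc_succ_top (by omega), add_comm]
    congr 1
    · exact Finset.sum_congr rfl fun i hi ↦ by grind
    · simp [C]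
  have hC : ∀ i ∈ Finset.Icc s (k + 1),
      C i ∈ polySubalgebra Fq ∧ fabs Fq (C i) < fabs Fq (pquot Fq f (i + 1)) := by
    intro i hi
    obtain ⟨hsi, hik⟩ := Finset.mem_Icc.1 hi
    by_cases hk : i = k + 1
    · simp only [C, if_pos hk]
      exact ⟨algebraMap_mem _ a,
        (fabs_algebraMap_le_one a).trans_lt (one_lt_fabs_pquot hfL hfirr i)⟩
    · simp only [C, if_neg hk]
      exact ⟨hBpoly i hsi (by omega), hBlt i hsi (by omega)⟩
  have hCs : C s = B (s + 1) := if_neg (by omega)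
  rw [hVC, fabs_fracPart_sum_mul_Qc_mul hfL hfirr (by omega) (fun i hi ↦ (hC i hi).1)
    (fun i hi ↦ (hC i hi).2) (hCs ▸ hBs), hCs]

end
end

section
/- For every nonzero f ∈ 𝕃 with deg f = −m (m ≥ 1) such that the Artin map Ψ(f) = {1/f} is defined (f ∉ 𝔽_q(t) suffices), the geometric Farey map satisfies F^{2m}(f, 0) = (Ψ(f), 0); that is, the Artin map is the acceleration of F by time −2·deg(f) at level 0. -/
/-!
Setting: `q` a prime power is formalized as `q = Fintype.card Fq` for a finite field `Fq`.
The field `K = 𝔽_q((t⁻¹))` of formal Laurent series in `t⁻¹` is realized as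
`LaurentSeries Fq = 𝔽_q((X))` with `X = t⁻¹` (so `deg f = -(X-adic order of f)`).
-/

open scoped Classical
open MeasureTheory Filter
open scoped ENNReal

noncomputable section

variable (Fq : Type) [Field Fq] [Fintype Fq]

/-! The first `m - 1` steps multiply by `t` without leaving `𝕃`, the next one inverts and sets
the level to `-m`, and at negative levels `F` is again multiplication by `t` followed by `{·}`,
which commutes with taking fractional parts; so `F^{2m}(f, 0) = ({t^m · (t^m f)⁻¹}, 0)
= ({1/f}, 0)`. -/

section

variable {F : Type} [Field F]

theorem tvar_eq_single : tvar F = HahnSeries.single (-1 : ℤ) (1 : F) := by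
  refine (eq_inv_of_mul_eq_one_left ?_).symm
  rw [HahnSeries.single_mul_single, neg_add_cancel, one_mul, HahnSeries.single_zero_one]

theorem tvar_ne_zero : tvar F ≠ 0 := by
  rw [tvar_eq_single]
  exact HahnSeries.single_ne_zero one_ne_zero

theorem tvar_pow (k : ℕ) : tvar F ^ k = HahnSeries.single (-(k : ℤ)) (1 : F) := by
  rw [tvar_eq_single, HahnSeries.single_pow, one_pow, smul_neg, nsmul_one]

theorem coeff_tvar_mul (g : LaurentSeries F) (j : ℤ) :
    (tvar F * g).coeff j = g.coeff (j + 1) := by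
  rw [tvar_eq_single, HahnSeries.coeff_single_mul, one_mul, sub_neg_eq_add]

theorem order_tvar_pow_mul (k : ℕ) {g : LaurentSeries F} (hg : g ≠ 0) :
    (tvar F ^ k * g).order = g.order - k := by
  rw [tvar_pow, HahnSeries.order_single_mul_of_isRegular isRegular_one hg, neg_add_eq_sub]

theorem fdeg_of_ne_zero {g : LaurentSeries F} (hg : g ≠ 0) :
    fdeg F g = ((-g.order : ℤ) : WithBot ℤ) :=
  if_neg hg

theorem fdeg_eq_coe_iff {g : LaurentSeries F} {d : ℤ} :
    fdeg F g = (d : WithBot ℤ) ↔ g ≠ 0 ∧ g.order = -d := by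
  by_cases hg : g = 0
  · simp [fdeg, hg]
  · rw [fdeg_of_ne_zero hg, WithBot.coe_inj]
    exact ⟨fun h => ⟨hg, by omega⟩, fun h => by omega⟩

theorem coeff_fracPart (g : LaurentSeries F) (j : ℤ) :
    (fracPart F g).coeff j = if j ≤ 0 then 0 else g.coeff j := by
  have hpoly : (polyPart F g).coeff j = if j ≤ 0 then g.coeff j else 0 := rfl
  rw [fracPart, HahnSeries.coeff_sub, hpoly]
  split_ifs <;> simp

theorem fracPart_eq_self_of_order_pos {g : LaurentSeries F} (hg : 0 < g.order) :
    fracPart F g = g := by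
  ext j
  rw [coeff_fracPart]
  split_ifs with hj
  · exact (HahnSeries.coeff_eq_zero_of_lt_order (by omega)).symm
  · rfl

theorem fracPart_tvar_mul_fracPart (x : LaurentSeries F) :
    fracPart F (tvar F * fracPart F x) = fracPart F (tvar F * x) := by
  ext j
  simp only [coeff_fracPart, coeff_tvar_mul]
  split_ifs <;> first | rfl | omega

theorem fareyGeom_of_fdeg_lt (g : LaurentSeries F) (n : ℤ)
    (hg : fdeg F g < ((-1 : ℤ) : WithBot ℤ)) :
    fareyGeom F (g, n) = (fracPart F (tvar F * g), n + 1) := by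
  rw [fareyGeom, if_pos (Or.inl hg)]

theorem fareyGeom_of_neg (g : LaurentSeries F) {n : ℤ} (hn : n < 0) :
    fareyGeom F (g, n) = (fracPart F (tvar F * g), n + 1) := by
  rw [fareyGeom, if_pos (Or.inr hn)]

theorem fareyGeom_of_fdeg_eq_neg_one {g : LaurentSeries F} {n : ℤ}
    (hg : fdeg F g = ((-1 : ℤ) : WithBot ℤ)) (hn : 0 ≤ n) :
    fareyGeom F (g, n) = (fracPart F ((tvar F * g)⁻¹), -(n + 1)) := by
  rw [fareyGeom, if_neg (by rw [hg, lt_self_iff_false, false_or, not_lt]; exact hn)]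

theorem fareyGeom_iterate_of_lt_order {g : LaurentSeries F} (hg : g ≠ 0) (n : ℤ) {k : ℕ}
    (hk : (k : ℤ) < g.order) :
    (fareyGeom F)^[k] (g, n) = (tvar F ^ k * g, n + k) := by
  induction k with
  | zero => simp
  | succ k ih =>
    have hdeg : fdeg F (tvar F ^ k * g) < ((-1 : ℤ) : WithBot ℤ) := by
      rw [fdeg_of_ne_zero (mul_ne_zero (pow_ne_zero _ tvar_ne_zero) hg),
        order_tvar_pow_mul _ hg, WithBot.coe_lt_coe]
      push_cast at hk
      omega
    have hpos : 0 < (tvar F ^ (k + 1) * g).order := by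
      rw [order_tvar_pow_mul _ hg]
      omega
    rw [Function.iterate_succ_apply', ih (by omega), fareyGeom_of_fdeg_lt _ _ hdeg,
      ← mul_assoc, ← pow_succ', fracPart_eq_self_of_order_pos hpos,
      Nat.cast_succ, add_assoc]

theorem fareyGeom_iterate_fracPart (x : LaurentSeries F) {n : ℤ} {j : ℕ} (h : n + j ≤ 0) :
    (fareyGeom F)^[j] (fracPart F x, n) = (fracPart F (tvar F ^ j * x), n + j) := by
  induction j with
  | zero => simp
  | succ j ih =>
    rw [Function.iterate_succ_apply', ih (by omega), fareyGeom_of_neg _ (by omega),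
      fracPart_tvar_mul_fracPart, ← mul_assoc, ← pow_succ', Nat.cast_succ, add_assoc]

end

theorem artin_is_acceleration_of_geometric_farey
    (f : LaurentSeries Fq) (m : ℕ) (hm : 1 ≤ m)
    (hdeg : fdeg Fq f = ((-(m : ℤ) : ℤ) : WithBot ℤ)) :
    (fareyGeom Fq)^[2 * m] (f, 0) = (artin Fq f, 0) := by
  obtain ⟨hf0, hord⟩ := fdeg_eq_coe_iff.mp hdeg
  rw [neg_neg] at hord
  obtain ⟨k, rfl⟩ := Nat.exists_eq_add_of_le' hm
  have hswitch : fdeg Fq (tvar Fq ^ k * f) = ((-1 : ℤ) : WithBot ℤ) :=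
    fdeg_eq_coe_iff.mpr ⟨mul_ne_zero (pow_ne_zero _ tvar_ne_zero) hf0,
      by rw [order_tvar_pow_mul _ hf0, hord]; push_cast; ring⟩
  rw [show 2 * (k + 1) = (k + 1) + 1 + k by ring, Function.iterate_add_apply,
    Function.iterate_add_apply, Function.iterate_one,
    fareyGeom_iterate_of_lt_order hf0 0 (by omega),
    fareyGeom_of_fdeg_eq_neg_one hswitch (by positivity),
    fareyGeom_iterate_fracPart _ (by push_cast; omega), ← mul_assoc, ← pow_succ', mul_inv,
    ← mul_assoc, mul_inv_cancel₀ (pow_ne_zero _ tvar_ne_zero), one_mul]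
  refine Prod.ext rfl ?_
  push_cast
  ring

end
end

section
/- Let f ∈ 𝕃 ∖ 𝔽_q(t). If ℓ = 2·(deg A_1 + ⋯ + deg A_k) + i with k ≥ 0 and 0 ≤ i < deg A_{k+1}, then the matrix product M(f,0)·M(F(f,0))·⋯·M(F^{ℓ−1}(f,0)) equals the 2×2 matrix with rows (P_{k−1}, tⁱ·P_k) and (Q_{k−1}, tⁱ·Q_k). -/
/-!
Setting: `q` a prime power is formalized as `q = Fintype.card Fq` for a finite field `Fq`.
The field `K = 𝔽_q((t⁻¹))` of formal Laurent series in `t⁻¹` is realized as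
`LaurentSeries Fq = 𝔽_q((X))` with `X = t⁻¹` (so `deg f = -(X-adic order of f)`).
-/

open scoped Classical
open MeasureTheory Filter
open scoped ENNReal

noncomputable section

variable (Fq : Type) [Field Fq] [Fintype Fq]

/-!
Starting from `(g, 0)` with `deg g = -d`, the geometric Farey map multiplies by `t` for `d - 1`
steps (matrices `diag(1, t)`), then inverts, landing at `({1/(tᵈg)}, -d)`, and then spends `d`
steps at negative times multiplying by `t` again until it reaches `({1/g}, 0) = (Ψ g, 0)`. The
`2d` matrices of this excursion telescope to `!![0, 1; 1, [1/g]]`, the continued-fraction matrix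
of the partial quotient `[1/g]`. Multiplying over the first `k` partial quotients gives
`!![P_{k-1}, P_k; Q_{k-1}, Q_k]`, and the remaining `i < deg A_{k+1}` steps are again
multiplications by `t`, contributing `diag(1, tⁱ)`.
-/

namespace GeomFarey

open HahnSeries

lemma matrix_fin_two_congr {α : Type*} {a b c d a' b' c' d' : α} (ha : a = a') (hb : b = b')
    (hc : c = c') (hd : d = d') : !![a, b; c, d] = !![a', b'; c', d'] := by
  rw [ha, hb, hc, hd]

variable {𝔽 : Type} [Field 𝔽]

lemma ne_zero_of_order_pos {g : LaurentSeries 𝔽} (hg : 0 < g.order) : g ≠ 0 := by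
  rintro rfl
  simp at hg

lemma order_inv {f : LaurentSeries 𝔽} (hf : f ≠ 0) : f⁻¹.order = -f.order := by
  have h := order_mul hf (inv_ne_zero hf)
  rw [mul_inv_cancel₀ hf, order_one] at h
  omega

variable (𝔽) in
lemma tvar_eq_single : tvar 𝔽 = single (-1 : ℤ) (1 : 𝔽) := by
  rw [tvar]
  apply inv_eq_of_mul_eq_one_right
  rw [single_mul_single]
  norm_num

variable (𝔽) in
lemma tvar_ne_zero : tvar 𝔽 ≠ 0 := by
  rw [tvar_eq_single]
  exact single_ne_zero one_ne_zero

lemma coeff_tvar_mul (f : LaurentSeries 𝔽) (j : ℤ) :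
    (tvar 𝔽 * f).coeff j = f.coeff (j + 1) := by
  have h := coeff_single_mul_add (r := (1 : 𝔽)) (x := f) (a := j + 1) (b := -1)
  rwa [add_neg_cancel_right, one_mul, ← tvar_eq_single] at h

lemma order_tvar_pow_mul (n : ℕ) {f : LaurentSeries 𝔽} (hf : f ≠ 0) :
    (tvar 𝔽 ^ n * f).order = f.order - n := by
  rw [tvar_eq_single, single_pow, one_pow, order_mul (single_ne_zero one_ne_zero) hf,
    order_single one_ne_zero, nsmul_eq_mul, mul_neg_one]
  ring

lemma fdeg_of_ne_zero {f : LaurentSeries 𝔽} (hf : f ≠ 0) :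
    fdeg 𝔽 f = ((-f.order : ℤ) : WithBot ℤ) :=
  if_neg hf

lemma coeff_polyPart (f : LaurentSeries 𝔽) (j : ℤ) :
    (polyPart 𝔽 f).coeff j = if j ≤ 0 then f.coeff j else 0 := rfl

lemma coeff_fracPart (f : LaurentSeries 𝔽) (j : ℤ) :
    (fracPart 𝔽 f).coeff j = if j ≤ 0 then 0 else f.coeff j := by
  rw [fracPart, coeff_sub, coeff_polyPart]
  split_ifs <;> simp

variable (𝔽) in
lemma polyPart_zero : polyPart 𝔽 0 = 0 := by
  ext j
  simp [coeff_polyPart]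

lemma fracPart_eq_self {f : LaurentSeries 𝔽} (hf : 1 ≤ f.order) : fracPart 𝔽 f = f := by
  ext j
  rw [coeff_fracPart]
  split_ifs
  · exact (coeff_eq_zero_of_lt_order (by omega)).symm
  · rfl

lemma fracPart_tvar_mul_fracPart (x : LaurentSeries 𝔽) :
    fracPart 𝔽 (tvar 𝔽 * fracPart 𝔽 x) = fracPart 𝔽 (tvar 𝔽 * x) := by
  ext j
  rw [coeff_fracPart, coeff_fracPart]
  split_ifs
  · rfl
  · rw [coeff_tvar_mul, coeff_tvar_mul, coeff_fracPart, if_neg (by omega)]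

lemma polyPart_tvar_mul_fracPart (x : LaurentSeries 𝔽) :
    polyPart 𝔽 (tvar 𝔽 * fracPart 𝔽 x)
      = polyPart 𝔽 (tvar 𝔽 * x) - tvar 𝔽 * polyPart 𝔽 x := by
  ext j
  rw [coeff_sub, coeff_polyPart, coeff_polyPart, coeff_tvar_mul, coeff_tvar_mul,
    coeff_tvar_mul, coeff_fracPart, coeff_polyPart]
  split_ifs <;> first | omega | simp

lemma one_le_order_fracPart {x : LaurentSeries 𝔽} (hx : fracPart 𝔽 x ≠ 0) :
    1 ≤ (fracPart 𝔽 x).order := by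
  rw [le_order_iff_forall hx]
  intro j hj
  rw [coeff_fracPart, if_pos (by omega)]

lemma fdeg_polyPart_inv {g : LaurentSeries 𝔽} (hg : 1 ≤ g.order) :
    fdeg 𝔽 (polyPart 𝔽 g⁻¹) = ((g.order : ℤ) : WithBot ℤ) := by
  have hg0 := ne_zero_of_order_pos (by omega : 0 < g.order)
  have hinv : g⁻¹.order = -g.order := order_inv hg0
  have hlead : (polyPart 𝔽 g⁻¹).coeff (-g.order) ≠ 0 := by
    rw [coeff_polyPart, if_pos (by omega), ← hinv]
    exact coeff_order_eq_zero.not.mpr (inv_ne_zero hg0)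
  have hne : polyPart 𝔽 g⁻¹ ≠ 0 := ne_zero_of_coeff_ne_zero hlead
  have hord : (polyPart 𝔽 g⁻¹).order = -g.order := by
    refine le_antisymm (order_le_of_coeff_ne_zero hlead) ((le_order_iff_forall hne).mpr ?_)
    intro j hj
    rw [coeff_polyPart]
    split_ifs
    · exact coeff_eq_zero_of_lt_order (by omega)
    · rfl
  rw [fdeg_of_ne_zero hne, hord, neg_neg]

lemma pquot_succ (f : LaurentSeries 𝔽) (n : ℕ) :
    pquot 𝔽 f (n + 1) = polyPart 𝔽 ((artin 𝔽)^[n] f)⁻¹ := rfl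

lemma one_le_order_of_mem_setL [Fintype 𝔽] {f : LaurentSeries 𝔽} (hfL : f ∈ setL 𝔽)
    (hf : f ≠ 0) : 1 ≤ f.order := by
  by_contra! h
  have hq : (1 : ℝ) ≤ Fintype.card 𝔽 := by exact_mod_cast Fintype.card_pos
  have : fabs 𝔽 f < 1 := hfL
  rw [fabs, if_neg hf] at this
  exact this.not_ge (one_le_zpow₀ hq (by omega))

lemma one_le_order_iterate_artin [Fintype 𝔽] {f : LaurentSeries 𝔽} (hfL : f ∈ setL 𝔽) (n : ℕ)
    (hf : (artin 𝔽)^[n] f ≠ 0) : 1 ≤ ((artin 𝔽)^[n] f).order := by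
  cases n with
  | zero => exact one_le_order_of_mem_setL hfL hf
  | succ n =>
    rw [Function.iterate_succ_apply'] at hf ⊢
    exact one_le_order_fracPart hf

lemma order_iterate_artin_eq [Fintype 𝔽] {f : LaurentSeries 𝔽} (hfL : f ∈ setL 𝔽) {n d : ℕ}
    (hA : fdeg 𝔽 (pquot 𝔽 f (n + 1)) = ((d : ℤ) : WithBot ℤ)) :
    0 < d ∧ ((artin 𝔽)^[n] f).order = d := by
  rw [pquot_succ] at hA
  have hne : (artin 𝔽)^[n] f ≠ 0 := by
    intro h
    rw [h, inv_zero, polyPart_zero, fdeg, if_pos rfl] at hA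
    exact WithBot.bot_ne_coe hA
  have hpos := one_le_order_iterate_artin hfL n hne
  rw [fdeg_polyPart_inv hpos, WithBot.coe_inj] at hA
  omega

lemma fareyGeom_of_two_le_order (n : ℤ) {g : LaurentSeries 𝔽} (hg : 2 ≤ g.order) :
    fareyGeom 𝔽 (g, n) = (tvar 𝔽 * g, n + 1) := by
  have hg0 := ne_zero_of_order_pos (by omega : 0 < g.order)
  have hdeg : fdeg 𝔽 g < ((-1 : ℤ) : WithBot ℤ) := by
    rw [fdeg_of_ne_zero hg0]
    exact_mod_cast (by omega : -g.order < -1)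
  have htg : 1 ≤ (tvar 𝔽 * g).order := by
    have := order_tvar_pow_mul 1 hg0
    rw [pow_one] at this
    omega
  simp only [fareyGeom, hdeg, true_or, if_true, fracPart_eq_self htg]

lemma fareyGeom_of_neg (g : LaurentSeries 𝔽) {n : ℤ} (hn : n < 0) :
    fareyGeom 𝔽 (g, n) = (fracPart 𝔽 (tvar 𝔽 * g), n + 1) := by
  simp [fareyGeom, hn]

lemma fareyGeom_of_order_eq_one {n : ℤ} (hn : 0 ≤ n) {g : LaurentSeries 𝔽} (hg : g.order = 1) :
    fareyGeom 𝔽 (g, n) = (fracPart 𝔽 (tvar 𝔽 * g)⁻¹, -(n + 1)) := by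
  have hdeg : fdeg 𝔽 g = ((-1 : ℤ) : WithBot ℤ) := by
    rw [fdeg_of_ne_zero (ne_zero_of_order_pos (by omega)), hg]
  simp [fareyGeom, hdeg, hn.not_gt]

lemma geomMat_of_two_le_order {n : ℤ} (hn : 0 ≤ n) {g : LaurentSeries 𝔽} (hg : 2 ≤ g.order) :
    geomMat 𝔽 (g, n) = !![1, 0; 0, tvar 𝔽] := by
  have hdeg : fdeg 𝔽 g ≠ ((-1 : ℤ) : WithBot ℤ) := by
    rw [fdeg_of_ne_zero (ne_zero_of_order_pos (by omega)), Ne, WithBot.coe_inj]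
    omega
  simp [geomMat, hdeg, hn.not_gt]

lemma geomMat_of_order_eq_one {n : ℤ} (hn : 0 ≤ n) {g : LaurentSeries 𝔽} (hg : g.order = 1) :
    geomMat 𝔽 (g, n) = !![0, 1; tvar 𝔽, tvar 𝔽 * polyPart 𝔽 (tvar 𝔽 * g)⁻¹] := by
  have hdeg : fdeg 𝔽 g = ((-1 : ℤ) : WithBot ℤ) := by
    rw [fdeg_of_ne_zero (ne_zero_of_order_pos (by omega)), hg]
  simp [geomMat, hdeg, hn.not_gt]

lemma geomMat_of_neg (g : LaurentSeries 𝔽) {n : ℤ} (hn : n < 0) :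
    geomMat 𝔽 (g, n) = !![(tvar 𝔽)⁻¹, (tvar 𝔽)⁻¹ * polyPart 𝔽 (tvar 𝔽 * g); 0, 1] := by
  simp [geomMat, hn]

def geomProd (p : LaurentSeries 𝔽 × ℤ) (n : ℕ) : Matrix (Fin 2) (Fin 2) (LaurentSeries 𝔽) :=
  ((List.range n).map fun j => geomMat 𝔽 ((fareyGeom 𝔽)^[j] p)).prod

lemma geomProd_zero (p : LaurentSeries 𝔽 × ℤ) : geomProd p 0 = 1 := rfl

lemma geomProd_succ (p : LaurentSeries 𝔽 × ℤ) (n : ℕ) :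
    geomProd p (n + 1) = geomProd p n * geomMat 𝔽 ((fareyGeom 𝔽)^[n] p) := by
  simp [geomProd, List.range_succ]

lemma geomProd_add (p : LaurentSeries 𝔽 × ℤ) (m n : ℕ) :
    geomProd p (m + n) = geomProd p m * geomProd ((fareyGeom 𝔽)^[m] p) n := by
  induction n with
  | zero => rw [Nat.add_zero, geomProd_zero, mul_one]
  | succ n ih =>
    rw [← Nat.add_assoc, geomProd_succ, ih, geomProd_succ, mul_assoc,
      ← Function.iterate_add_apply, Nat.add_comm n m]

lemma iterate_fareyGeom_of_lt_order (n : ℤ) {g : LaurentSeries 𝔽} {j : ℕ}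
    (hj : (j : ℤ) < g.order) :
    (fareyGeom 𝔽)^[j] (g, n) = (tvar 𝔽 ^ j * g, n + j) := by
  have hg0 := ne_zero_of_order_pos (by omega : 0 < g.order)
  induction j with
  | zero => simp
  | succ j ih =>
    rw [Function.iterate_succ_apply', ih (by omega),
      fareyGeom_of_two_le_order _ (by rw [order_tvar_pow_mul j hg0]; omega)]
    simp [pow_succ', mul_assoc, add_assoc]

lemma geomProd_of_lt_order {n : ℤ} (hn : 0 ≤ n) {g : LaurentSeries 𝔽} {j : ℕ}
    (hj : (j : ℤ) < g.order) :
    geomProd (g, n) j = !![1, 0; 0, tvar 𝔽 ^ j] := by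
  have hg0 := ne_zero_of_order_pos (by omega : 0 < g.order)
  induction j with
  | zero => simp [geomProd_zero, Matrix.one_fin_two]
  | succ j ih =>
    rw [geomProd_succ, ih (by omega), iterate_fareyGeom_of_lt_order n (by omega),
      geomMat_of_two_le_order (by omega) (by rw [order_tvar_pow_mul j hg0]; omega)]
    simp [pow_succ]

lemma iterate_fareyGeom_fracPart (x : LaurentSeries 𝔽) {m : ℤ} {j : ℕ} (hm : m + j ≤ 0) :
    (fareyGeom 𝔽)^[j] (fracPart 𝔽 x, m) = (fracPart 𝔽 (tvar 𝔽 ^ j * x), m + j) := by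
  induction j with
  | zero => simp
  | succ j ih =>
    rw [Function.iterate_succ_apply', ih (by omega), fareyGeom_of_neg _ (by omega),
      fracPart_tvar_mul_fracPart]
    simp [pow_succ', mul_assoc, add_assoc]

lemma geomProd_fracPart (x : LaurentSeries 𝔽) {m : ℤ} {j : ℕ} (hm : m + j ≤ 0) :
    geomProd (fracPart 𝔽 x, m) j
      = !![(tvar 𝔽 ^ j)⁻¹, (tvar 𝔽 ^ j)⁻¹ * polyPart 𝔽 (tvar 𝔽 ^ j * x) - polyPart 𝔽 x;
           0, 1] := by
  induction j with
  | zero => simp [geomProd_zero, Matrix.one_fin_two]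
  | succ j ih =>
    rw [geomProd_succ, ih (by omega), iterate_fareyGeom_fracPart _ (by omega),
      geomMat_of_neg _ (by omega), polyPart_tvar_mul_fracPart]
    have ht := tvar_ne_zero 𝔽
    rw [Matrix.mul_fin_two, pow_succ' (tvar 𝔽), mul_assoc]
    refine matrix_fin_two_congr ?_ ?_ ?_ ?_ <;> field_simp <;> ring

lemma iterate_fareyGeom_of_order_eq {g : LaurentSeries 𝔽} {d : ℕ} (hd : 0 < d)
    (hg : g.order = d) :
    (fareyGeom 𝔽)^[d] (g, 0) = (fracPart 𝔽 (tvar 𝔽 ^ d * g)⁻¹, -(d : ℤ)) := by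
  obtain ⟨e, rfl⟩ : ∃ e, d = e + 1 := ⟨d - 1, by omega⟩
  have hg0 := ne_zero_of_order_pos (by omega : 0 < g.order)
  rw [Function.iterate_succ_apply', iterate_fareyGeom_of_lt_order 0 (by omega),
    fareyGeom_of_order_eq_one (by omega) (by rw [order_tvar_pow_mul e hg0]; omega)]
  simp [pow_succ', mul_assoc, add_comm]

lemma iterate_fareyGeom_period {g : LaurentSeries 𝔽} {d : ℕ} (hd : 0 < d)
    (hg : g.order = d) :
    (fareyGeom 𝔽)^[2 * d] (g, 0) = (artin 𝔽 g, 0) := by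
  have htd : tvar 𝔽 ^ d * (tvar 𝔽 ^ d * g)⁻¹ = g⁻¹ := by
    rw [mul_inv, ← mul_assoc, mul_inv_cancel₀ (pow_ne_zero _ (tvar_ne_zero 𝔽)), one_mul]
  rw [two_mul, Function.iterate_add_apply, iterate_fareyGeom_of_order_eq hd hg,
    iterate_fareyGeom_fracPart _ (by omega), htd, neg_add_cancel, artin]

lemma geomProd_period {g : LaurentSeries 𝔽} {d : ℕ} (hd : 0 < d) (hg : g.order = d) :
    geomProd (g, 0) (2 * d) = !![0, 1; 1, polyPart 𝔽 g⁻¹] := by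
  obtain ⟨e, rfl⟩ : ∃ e, d = e + 1 := ⟨d - 1, by omega⟩
  have hg0 := ne_zero_of_order_pos (by omega : 0 < g.order)
  have ht := tvar_ne_zero 𝔽
  have htd : tvar 𝔽 ^ (e + 1) * (tvar 𝔽 ^ (e + 1) * g)⁻¹ = g⁻¹ := by
    rw [mul_inv, ← mul_assoc, mul_inv_cancel₀ (pow_ne_zero _ ht), one_mul]
  rw [two_mul, geomProd_add, iterate_fareyGeom_of_order_eq hd hg,
    geomProd_fracPart _ (by omega), htd, geomProd_succ, geomProd_of_lt_order le_rfl (by omega),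
    iterate_fareyGeom_of_lt_order 0 (by omega),
    geomMat_of_order_eq_one (by omega) (by rw [order_tvar_pow_mul e hg0]; omega),
    ← mul_assoc, ← pow_succ', Matrix.mul_fin_two, Matrix.mul_fin_two]
  refine matrix_fin_two_congr ?_ ?_ ?_ ?_ <;> field_simp <;> ring

def convMat (f : LaurentSeries 𝔽) (k : ℕ) : Matrix (Fin 2) (Fin 2) (LaurentSeries 𝔽) :=
  !![Pc 𝔽 f k, Pc 𝔽 f (k + 1); Qc 𝔽 f k, Qc 𝔽 f (k + 1)]

lemma convMat_zero (f : LaurentSeries 𝔽) : convMat f 0 = 1 := by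
  simp [convMat, Pc, Qc, convPQ, Matrix.one_fin_two]

lemma convMat_succ (f : LaurentSeries 𝔽) (k : ℕ) :
    convMat f (k + 1) = convMat f k * !![0, 1; 1, pquot 𝔽 f (k + 1)] := by
  rw [convMat, convMat, Matrix.mul_fin_two]
  refine matrix_fin_two_congr ?_ ?_ ?_ ?_
  · ring
  · simp only [Pc, convPQ]; ring
  · ring
  · simp only [Qc, convPQ]; ring

lemma geomProd_convergents (f : LaurentSeries 𝔽) {k : ℕ} {d : ℕ → ℕ}
    (h : ∀ n < k, 0 < d (n + 1) ∧ ((artin 𝔽)^[n] f).order = d (n + 1)) :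
    (fareyGeom 𝔽)^[2 * ∑ n ∈ Finset.Icc 1 k, d n] (f, 0) = ((artin 𝔽)^[k] f, 0) ∧
      geomProd (f, 0) (2 * ∑ n ∈ Finset.Icc 1 k, d n) = convMat f k := by
  induction k with
  | zero => simp [geomProd_zero, convMat_zero]
  | succ k ih =>
    obtain ⟨hstate, hprod⟩ := ih fun n hn => h n (by omega)
    obtain ⟨hd, hg⟩ := h k (by omega)
    rw [Finset.sum_Icc_succ_top (by omega), mul_add]
    constructor
    · rw [add_comm, Function.iterate_add_apply, hstate, iterate_fareyGeom_period hd hg,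
        Function.iterate_succ_apply']
    · rw [geomProd_add, hprod, hstate, geomProd_period hd hg, convMat_succ, pquot_succ]

end GeomFarey

open GeomFarey

theorem geom_matrix_product_first_case
    (f : LaurentSeries Fq) (hfL : f ∈ setL Fq)
    (k : ℕ) (d : ℕ → ℕ)
    (hd : ∀ n, 1 ≤ n → n ≤ k + 1 → fdeg Fq (pquot Fq f n) = ((d n : ℤ) : WithBot ℤ))
    (i : ℕ) (hi : i < d (k + 1))
    (ℓ : ℕ) (hℓ : ℓ = 2 * ∑ n ∈ Finset.Icc 1 k, d n + i) :
    ((List.range ℓ).map (fun j => geomMat Fq ((fareyGeom Fq)^[j] (f, 0)))).prod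
      = !![Pc Fq f k, (tvar Fq) ^ i * Pc Fq f (k + 1);
           Qc Fq f k, (tvar Fq) ^ i * Qc Fq f (k + 1)] := by
  have horder : ∀ n ≤ k, 0 < d (n + 1) ∧ ((artin Fq)^[n] f).order = d (n + 1) :=
    fun n hn => order_iterate_artin_eq hfL (hd (n + 1) (by omega) (by omega))
  obtain ⟨hstate, hprod⟩ := geomProd_convergents f fun n hn => horder n hn.le
  have htail : geomProd ((artin Fq)^[k] f, 0) i = !![1, 0; 0, tvar Fq ^ i] :=
    geomProd_of_lt_order le_rfl (by rw [(horder k le_rfl).2]; exact_mod_cast hi)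
  change geomProd (f, 0) ℓ = _
  rw [hℓ, geomProd_add, hstate, hprod, htail, convMat, Matrix.mul_fin_two]
  refine matrix_fin_two_congr ?_ ?_ ?_ ?_ <;> ring

end
end
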